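/- arXiv:1912.09868 — 6 statements merged into one kernel-verified Lean document; each statement's English description precedes it below -/
import Mathlib

section
/- There exists a continuous function u : K → ℝ such that a_n(u) = n for every integer n ≥ 1. -/
open Set

namespace SG

/-- The three vertices of the Sierpiński gasket. -/
noncomputable def p : Fin 3 → ℝ × ℝ := ![(0, 0), (1, 0), (1 / 2, Real.sqrt 3 / 2)]

/-- The three contractions `f_i(x) = (x + p_i)/2`. -/
noncomputable def f (i : Fin 3) (x : ℝ × ℝ) : ℝ × ℝ :=
  ((x.1 + (p i).1) / 2, (x.2 + (p i).2) / 2)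

/-- The vertex sets `V₀ = {p₀,p₁,p₂}`, `V_{n+1} = ⋃ f_i(V_n)`. -/
noncomputable def V : ℕ → Set (ℝ × ℝ)
  | 0 => Set.range p
  | n + 1 => ⋃ i : Fin 3, f i '' V n

/-- The Sierpiński gasket: the closure of `V_* = ⋃_n V_n`. -/
noncomputable def K : Set (ℝ × ℝ) := closure (⋃ n, V n)

/-- For a word `w = w₁…w_n`, the composition `f_{w₁} ∘ … ∘ f_{w_n}`. -/
noncomputable def fw {n : ℕ} (w : Fin n → Fin 3) (x : ℝ × ℝ) : ℝ × ℝ :=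
  (List.ofFn w).foldr f x

/-- The graph energy
`a_n(u) = (5/3)^n Σ_{w ∈ W_n} Σ_{{p,q} ⊆ V_w, p ≠ q} (u(p) − u(q))²`
(the inner sum over unordered pairs is written as half of the ordered sum). -/
noncomputable def a (n : ℕ) (u : ℝ × ℝ → ℝ) : ℝ :=
  (5 / 3) ^ n * ∑ w : Fin n → Fin 3,
    (∑ i : Fin 3, ∑ j : Fin 3, (u (fw w (p i)) - u (fw w (p j))) ^ 2) / 2

end SG

/-!
The function vanishes at `p₀`, takes the values `0, aₙ, aₙ` at the corners of the corner cell
`f₀ⁿ K` (with `a₀ = a₁ = √(3/10)` and `aₙ₊₁ = √(3/5) aₙ` for `n ≥ 1`), and is harmonic on every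
other cell. Harmonic extension multiplies the energy by `3/5` per level, which the factor
`(5/3)ⁿ` in `a_n` undoes, so `a_n(u)` counts one unit for the corner cell of level `n` and one
for each pair of side cells split off the corner cells of levels `1, …, n - 1`; the values on
the side cells are chosen to make each pair carry exactly one unit.

The function is the sum of a telescoping series of piecewise linear interpolations of these
values on the `V_m`; its terms decay like `√(3/5)ᵐ` uniformly on `K`.
-/

namespace SG

noncomputable def baryCoord (x : ℝ × ℝ) : Fin 3 → ℝ :=
  ![1 - x.1 - x.2 / √3, x.1 - x.2 / √3, 2 * x.2 / √3]

lemma continuous_baryCoord (k : Fin 3) : Continuous fun x => baryCoord x k := by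
  fin_cases k <;> simp only [baryCoord] <;> fun_prop

lemma sum_baryCoord (x : ℝ × ℝ) : ∑ k, baryCoord x k = 1 := by
  simp only [baryCoord, Fin.sum_univ_three, Matrix.cons_val_zero, Matrix.cons_val_one,
    Matrix.cons_val]
  ring

lemma baryCoord_injective : Function.Injective baryCoord := by
  intro x y h
  have h1 : x.1 - x.2 / √3 = y.1 - y.2 / √3 := congrFun h 1
  have h2 : 2 * x.2 / √3 = 2 * y.2 / √3 := congrFun h 2
  have hy : x.2 = y.2 := by field_simp at h2; linarith
  ext <;> [linarith [hy ▸ h1]; exact hy]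

lemma baryCoord_p (i k : Fin 3) : baryCoord (p i) k = if k = i then 1 else 0 := by
  fin_cases i <;> fin_cases k <;> simp [baryCoord, p] <;> field_simp <;> norm_num

lemma baryCoord_f (i : Fin 3) (x : ℝ × ℝ) (k : Fin 3) :
    baryCoord (f i x) k = (baryCoord x k + baryCoord (p i) k) / 2 := by
  fin_cases k <;> simp [baryCoord, f] <;> ring

lemma f_p_self (i : Fin 3) : f i (p i) = p i := by
  ext <;> simp [f]

lemma f_p_comm (i j : Fin 3) : f i (p j) = f j (p i) := by
  ext <;> simp [f, add_comm]

noncomputable def fHomeomorph (i : Fin 3) : ℝ × ℝ ≃ₜ ℝ × ℝ where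
  toFun := f i
  invFun x := (2 * x.1 - (p i).1, 2 * x.2 - (p i).2)
  left_inv x := by ext <;> simp [f] <;> ring
  right_inv x := by ext <;> simp [f]
  continuous_toFun := by unfold f; fun_prop
  continuous_invFun := by fun_prop

@[simp] lemma coe_fHomeomorph (i : Fin 3) : ⇑(fHomeomorph i) = f i := rfl

def triangle : Set (ℝ × ℝ) := {x | ∀ k, 0 ≤ baryCoord x k}

lemma isClosed_triangle : IsClosed triangle := by
  simp only [triangle, ofPred_forall]
  exact isClosed_iInter fun k => isClosed_le continuous_const (continuous_baryCoord k)

lemma p_mem_triangle (i : Fin 3) : p i ∈ triangle := fun k => by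
  rw [baryCoord_p]; split_ifs <;> norm_num

lemma f_mem_triangle (i : Fin 3) {x : ℝ × ℝ} (hx : x ∈ triangle) : f i x ∈ triangle :=
  fun k => by rw [baryCoord_f]; linarith [hx k, p_mem_triangle i k]

lemma baryCoord_le_one {x : ℝ × ℝ} (hx : x ∈ triangle) (k : Fin 3) : baryCoord x k ≤ 1 := by
  rw [← sum_baryCoord x]
  exact Finset.single_le_sum (fun l _ => hx l) (Finset.mem_univ k)

lemma eq_p_of_baryCoord_eq_one {x : ℝ × ℝ} (hx : x ∈ triangle) {j : Fin 3}
    (h : baryCoord x j = 1) : x = p j := by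
  apply baryCoord_injective
  ext k
  rw [baryCoord_p]
  split_ifs with hk
  · rw [hk, h]
  · have hrest : ∑ l ∈ Finset.univ.erase j, baryCoord x l = 0 := by
      have := Finset.add_sum_erase _ (baryCoord x) (Finset.mem_univ j)
      rw [sum_baryCoord, h] at this
      linarith
    exact (Finset.sum_eq_zero_iff_of_nonneg fun l _ => hx l).1 hrest k (by simpa using hk)

lemma V_subset_triangle (n : ℕ) : V n ⊆ triangle := by
  induction n with
  | zero => rintro _ ⟨i, rfl⟩; exact p_mem_triangle i
  | succ n ih =>
    simp only [V, iUnion_subset_iff, image_subset_iff]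
    exact fun i x hx => f_mem_triangle i (ih hx)

lemma K_subset_triangle : K ⊆ triangle :=
  closure_minimal (iUnion_subset V_subset_triangle) isClosed_triangle

lemma V_monotone : Monotone V := by
  refine monotone_nat_of_le_succ fun n => ?_
  induction n with
  | zero =>
    rintro _ ⟨i, rfl⟩
    exact mem_iUnion.2 ⟨i, p i, ⟨i, rfl⟩, f_p_self i⟩
  | succ n ih =>
    exact iUnion_mono fun i => image_mono ih

lemma iUnion_V_eq : ⋃ n, V n = ⋃ i, f i '' ⋃ n, V n := by
  simp_rw [image_iUnion]
  rw [iUnion_comm, ← V_monotone.iUnion_nat_add 1]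
  rfl

lemma K_eq_iUnion_image : K = ⋃ i, f i '' K := by
  simp_rw [K, ← coe_fHomeomorph, Homeomorph.image_closure, ← closure_iUnion_of_finite]
  exact congrArg closure iUnion_V_eq

lemma exists_f_eq_of_mem_K {x : ℝ × ℝ} (hx : x ∈ K) : ∃ i, ∃ y ∈ K, f i y = x := by
  rw [K_eq_iUnion_image] at hx
  simpa using hx

lemma mapsTo_f_K (i : Fin 3) : MapsTo (f i) K K := fun x hx => by
  rw [K_eq_iUnion_image]; exact mem_iUnion.2 ⟨i, x, hx, rfl⟩

lemma p_mem_K (i : Fin 3) : p i ∈ K :=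
  subset_closure (mem_iUnion.2 ⟨0, i, rfl⟩)

lemma isClosed_image_f_K (i : Fin 3) : IsClosed (f i '' K) :=
  (fHomeomorph i).isClosedMap _ isClosed_closure

lemma fw_succ {n : ℕ} (w : Fin (n + 1) → Fin 3) (x : ℝ × ℝ) :
    fw w x = f (w 0) (fw (Fin.tail w) x) := by
  rw [fw, List.ofFn_succ]; rfl

lemma fw_mem_K {n : ℕ} (w : Fin n → Fin 3) {x : ℝ × ℝ} (hx : x ∈ K) : fw w x ∈ K := by
  induction n with
  | zero => simpa [fw] using hx
  | succ n ih => rw [fw_succ]; exact mapsTo_f_K _ (ih _)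

lemma abs_sum_mul_baryCoord_le {x : ℝ × ℝ} (hx : x ∈ triangle) {g : Fin 3 → ℝ} {M : ℝ}
    (hg : ∀ k, |g k| ≤ M) : |∑ k, g k * baryCoord x k| ≤ M := by
  calc |∑ k, g k * baryCoord x k| ≤ ∑ k, |g k| * baryCoord x k := by
        refine (Finset.abs_sum_le_sum_abs _ _).trans (le_of_eq ?_)
        simp_rw [abs_mul, abs_of_nonneg (hx _)]
    _ ≤ ∑ k, M * baryCoord x k :=
        Finset.sum_le_sum fun k _ => mul_le_mul_of_nonneg_right (hg k) (hx k)
    _ = M := by rw [← Finset.mul_sum, sum_baryCoord, mul_one]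

noncomputable def subcell (x : ℝ × ℝ) : Fin 3 :=
  if 1 / 2 ≤ baryCoord x 0 then 0 else if 1 / 2 ≤ baryCoord x 1 then 1 else 2

lemma subcell_p (i : Fin 3) : subcell (p i) = i := by
  fin_cases i <;> norm_num [subcell, baryCoord_p, Fin.ext_iff]

lemma half_le_baryCoord_f_subcell {y : ℝ × ℝ} (hy : y ∈ triangle) {i : Fin 3}
    (h : subcell (f i y) ≠ i) : 1 / 2 ≤ baryCoord (f i y) (subcell (f i y)) := by
  have hi : 1 / 2 ≤ baryCoord (f i y) i := by
    rw [baryCoord_f, baryCoord_p, if_pos rfl]; linarith [hy i]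
  unfold subcell at h ⊢
  split_ifs at h ⊢ with h0 h1
  · exact h0
  · exact h1
  · fin_cases i <;> simp_all

lemma eq_or_eq_p_of_subcell_f_eq {y : ℝ × ℝ} (hy : y ∈ triangle) {i j : Fin 3}
    (hj : subcell (f i y) = j) : j = i ∨ y = p j := by
  subst hj
  by_cases h : subcell (f i y) = i
  · exact .inl h
  have := half_le_baryCoord_f_subcell hy h
  rw [baryCoord_f, baryCoord_p, if_neg h] at this
  exact .inr (eq_p_of_baryCoord_eq_one hy (le_antisymm (baryCoord_le_one hy _) (by linarith)))

lemma sum_fun_fin_succ {α M : Type*} [Fintype α] [AddCommMonoid M] {n : ℕ}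
    (F : (Fin (n + 1) → α) → M) : ∑ w, F w = ∑ i, ∑ w : Fin n → α, F (Fin.cons i w) := by
  rw [← (Fin.consEquiv fun _ => α).sum_comp, Fintype.sum_prod_type]
  rfl

noncomputable def cellEnergy (g : Fin 3 → ℝ) : ℝ := (∑ i, ∑ j, (g i - g j) ^ 2) / 2

lemma cellEnergy_eq (g : Fin 3 → ℝ) :
    cellEnergy g = (g 0 - g 1) ^ 2 + (g 1 - g 2) ^ 2 + (g 2 - g 0) ^ 2 := by
  simp only [cellEnergy, Fin.sum_univ_three]; ring

lemma cellEnergy_const (c : ℝ) : cellEnergy (fun _ => c) = 0 := by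
  simp [cellEnergy]

lemma cellEnergy_nonneg (g : Fin 3 → ℝ) : 0 ≤ cellEnergy g := by
  rw [cellEnergy_eq]; positivity

/-- A function on `K` described cell by cell: a cell in state `s` has the corner values `val s`
and its `i`-th subcell is in state `step s i`. On the subcells the corner values deviate from
linear interpolation by at most `bound s`, which decays geometrically under `step`. -/
structure CellSystem (S : Type*) where
  val : S → Fin 3 → ℝ
  step : S → Fin 3 → S
  val_step_self : ∀ s i, val (step s i) i = val s i
  val_step_comm : ∀ s i j, val (step s i) j = val (step s j) i
  bound : S → ℝ
  rate : ℝ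
  rate_nonneg : 0 ≤ rate
  rate_lt_one : rate < 1
  abs_val_step_sub_le : ∀ s i k, |val (step s i) k - (val s i + val s k) / 2| ≤ bound s
  bound_step_le : ∀ s i, bound (step s i) ≤ rate * bound s

namespace CellSystem

variable {S : Type*} (C : CellSystem S)

/-- `approx m s` interpolates linearly, on each subcell of level `m`, the corner values it is
assigned by `s`. A point lying on two subcells is sent to the one of lower index; by
`val_step_comm` the choice does not matter. -/
noncomputable def approx : ℕ → S → ℝ × ℝ → ℝ
  | 0, s, x => ∑ k, C.val s k * baryCoord x k
  | m + 1, s, x => approx m (C.step s (subcell x)) ((fHomeomorph (subcell x)).symm x)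

lemma approx_p (m : ℕ) (s : S) (i : Fin 3) : C.approx m s (p i) = C.val s i := by
  induction m generalizing s with
  | zero => simp [approx, baryCoord_p]
  | succ m ih =>
    have hp : (fHomeomorph i).symm (p i) = p i := by
      rw [Homeomorph.symm_apply_eq, coe_fHomeomorph, f_p_self]
    rw [approx, subcell_p, hp, ih, val_step_self]

lemma approx_succ_f (m : ℕ) (s : S) (i : Fin 3) {y : ℝ × ℝ} (hy : y ∈ triangle) :
    C.approx (m + 1) s (f i y) = C.approx m (C.step s i) y := by
  obtain ⟨j, hj⟩ : ∃ j, subcell (f i y) = j := ⟨_, rfl⟩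
  rw [approx, hj]
  obtain rfl | rfl := eq_or_eq_p_of_subcell_f_eq hy hj
  · rw [← coe_fHomeomorph, Homeomorph.symm_apply_apply]
  · rw [f_p_comm, ← coe_fHomeomorph, Homeomorph.symm_apply_apply, approx_p, approx_p,
      val_step_comm]

lemma approx_zero_f (s : S) (i : Fin 3) (y : ℝ × ℝ) :
    C.approx 0 s (f i y) = ∑ k, (C.val s i + C.val s k) / 2 * baryCoord y k := by
  have hp : ∑ k, C.val s k * baryCoord (p i) k = C.val s i := C.approx_p 0 s i
  have hb := sum_baryCoord y
  simp only [approx, baryCoord_f, Fin.sum_univ_three] at hp hb ⊢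
  linear_combination (1 / 2) * hp - (C.val s i / 2) * hb

lemma continuousOn_approx (m : ℕ) (s : S) : ContinuousOn (C.approx m s) K := by
  induction m generalizing s with
  | zero =>
    exact Continuous.continuousOn
      (continuous_finsetSum _ fun k _ => continuous_const.mul (continuous_baryCoord k))
  | succ m ih =>
    rw [K_eq_iUnion_image]
    refine (locallyFinite_of_finite _).continuousOn_iUnion isClosed_image_f_K fun i => ?_
    refine ((ih (C.step s i)).comp (fHomeomorph i).symm.continuous.continuousOn ?_).congr ?_
    · rintro _ ⟨y, hy, rfl⟩
      rwa [← coe_fHomeomorph, Homeomorph.symm_apply_apply]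
    · rintro _ ⟨y, hy, rfl⟩
      rw [approx_succ_f _ _ _ _ (K_subset_triangle hy), Function.comp_apply, ← coe_fHomeomorph,
        Homeomorph.symm_apply_apply]

lemma abs_approx_succ_sub_le (m : ℕ) (s : S) {x : ℝ × ℝ} (hx : x ∈ K) :
    |C.approx (m + 1) s x - C.approx m s x| ≤ C.bound s * C.rate ^ m := by
  induction m generalizing s x with
  | zero =>
    obtain ⟨i, y, hy, rfl⟩ := exists_f_eq_of_mem_K hx
    have hyΔ := K_subset_triangle hy
    have key : C.approx 1 s (f i y) - C.approx 0 s (f i y)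
        = ∑ k, (C.val (C.step s i) k - (C.val s i + C.val s k) / 2) * baryCoord y k := by
      rw [approx_succ_f _ _ _ _ hyΔ, approx_zero_f]
      simp only [approx, ← Finset.sum_sub_distrib, sub_mul]
    rw [key, pow_zero, mul_one]
    exact abs_sum_mul_baryCoord_le hyΔ (C.abs_val_step_sub_le s i)
  | succ m ih =>
    obtain ⟨i, y, hy, rfl⟩ := exists_f_eq_of_mem_K hx
    have hyΔ := K_subset_triangle hy
    rw [approx_succ_f _ _ _ _ hyΔ, approx_succ_f _ _ _ _ hyΔ]
    calc _ ≤ C.bound (C.step s i) * C.rate ^ m := ih _ hy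
      _ ≤ C.rate * C.bound s * C.rate ^ m :=
          mul_le_mul_of_nonneg_right (C.bound_step_le s i) (pow_nonneg C.rate_nonneg m)
      _ = C.bound s * C.rate ^ (m + 1) := by ring

noncomputable def extend (s : S) (x : ℝ × ℝ) : ℝ :=
  C.approx 0 s x + ∑' m, (C.approx (m + 1) s x - C.approx m s x)

lemma summable_bound_mul_rate_pow (s : S) : Summable fun m => C.bound s * C.rate ^ m :=
  (summable_geometric_of_lt_one C.rate_nonneg C.rate_lt_one).mul_left _

lemma summable_approx_succ_sub (s : S) {x : ℝ × ℝ} (hx : x ∈ K) :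
    Summable fun m => C.approx (m + 1) s x - C.approx m s x :=
  (C.summable_bound_mul_rate_pow s).of_norm_bounded fun m => C.abs_approx_succ_sub_le m s hx

lemma continuousOn_extend (s : S) : ContinuousOn (C.extend s) K :=
  (C.continuousOn_approx 0 s).add <|
    continuousOn_tsum
      (fun m => (C.continuousOn_approx (m + 1) s).sub (C.continuousOn_approx m s))
      (C.summable_bound_mul_rate_pow s) fun m _ hx => C.abs_approx_succ_sub_le m s hx

lemma extend_p (s : S) (i : Fin 3) : C.extend s (p i) = C.val s i := by
  simp [extend, approx_p]

lemma extend_f (s : S) (i : Fin 3) {y : ℝ × ℝ} (hy : y ∈ K) :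
    C.extend s (f i y) = C.extend (C.step s i) y := by
  have hyΔ := K_subset_triangle hy
  rw [extend, (C.summable_approx_succ_sub s (mapsTo_f_K i hy)).tsum_eq_zero_add]
  simp only [extend, approx_succ_f _ _ _ _ hyΔ]
  ring

def wordState (s : S) {n : ℕ} (w : Fin n → Fin 3) : S := (List.ofFn w).foldl C.step s

lemma wordState_succ (s : S) {n : ℕ} (w : Fin (n + 1) → Fin 3) :
    C.wordState s w = C.wordState (C.step s (w 0)) (Fin.tail w) := by
  rw [wordState, List.ofFn_succ]; rfl

lemma extend_fw (s : S) {n : ℕ} (w : Fin n → Fin 3) (i : Fin 3) :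
    C.extend s (fw w (p i)) = C.val (C.wordState s w) i := by
  induction n generalizing s with
  | zero => simp [fw, wordState, extend_p]
  | succ n ih => rw [fw_succ, C.extend_f _ _ (fw_mem_K _ (p_mem_K i)), ih, wordState_succ]

noncomputable def energy (s : S) (n : ℕ) : ℝ :=
  ∑ w : Fin n → Fin 3, cellEnergy (C.val (C.wordState s w))

lemma energy_zero (s : S) : C.energy s 0 = cellEnergy (C.val s) := by
  simp [energy, wordState]

lemma energy_succ (s : S) (n : ℕ) : C.energy s (n + 1) = ∑ i, C.energy (C.step s i) n := by
  simp [energy, sum_fun_fin_succ, wordState_succ]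

lemma a_extend (s : S) (n : ℕ) : a n (C.extend s) = (5 / 3) ^ n * C.energy s n := by
  simp only [a, extend_fw]
  rfl

end CellSystem

/-- The harmonic extension to the `i`-th subcell, by the `2/5, 2/5, 1/5` rule at the midpoints. -/
noncomputable def harmonicStep (g : Fin 3 → ℝ) (i : Fin 3) : Fin 3 → ℝ :=
  fun k => if k = i then g i else (g i + g k + ∑ l, g l) / 5

lemma harmonicStep_self (g : Fin 3 → ℝ) (i : Fin 3) : harmonicStep g i i = g i := if_pos rfl

lemma harmonicStep_comm (g : Fin 3 → ℝ) (i j : Fin 3) :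
    harmonicStep g i j = harmonicStep g j i := by
  by_cases h : j = i
  · rw [h]
  · simp only [harmonicStep, if_neg h, if_neg (Ne.symm h), add_comm (g i)]

lemma sum_cellEnergy_harmonicStep (g : Fin 3 → ℝ) :
    ∑ i, cellEnergy (harmonicStep g i) = 3 / 5 * cellEnergy g := by
  simp only [cellEnergy_eq, harmonicStep, Fin.sum_univ_three, Fin.isValue, ↓reduceIte,
    Fin.reduceEq]
  ring

lemma cellEnergy_harmonicStep_le (g : Fin 3 → ℝ) (i : Fin 3) :
    cellEnergy (harmonicStep g i) ≤ 3 / 5 * cellEnergy g := by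
  rw [← sum_cellEnergy_harmonicStep]
  exact Finset.single_le_sum (fun j _ => cellEnergy_nonneg _) (Finset.mem_univ i)

lemma abs_harmonicStep_sub_le (g : Fin 3 → ℝ) (i k : Fin 3) :
    |harmonicStep g i k - (g i + g k) / 2| ≤ √(cellEnergy g) := by
  apply Real.abs_le_sqrt
  rw [cellEnergy_eq]
  fin_cases i <;> fin_cases k <;> simp [harmonicStep, Fin.sum_univ_three] <;>
    nlinarith [sq_nonneg (g 0 - g 1), sq_nonneg (g 1 - g 2), sq_nonneg (g 2 - g 0),
      sq_nonneg (g 0 + g 1 - 2 * g 2), sq_nonneg (g 1 + g 2 - 2 * g 0),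
      sq_nonneg (g 2 + g 0 - 2 * g 1)]

noncomputable def ratio : ℝ := √(3 / 5)

noncomputable def sideValue : ℝ := (1 + ratio - √(6 * ratio - 18 / 5)) / 2

noncomputable def rootAmplitude : ℝ := √(3 / 10)

lemma ratio_sq : ratio ^ 2 = 3 / 5 := Real.sq_sqrt (by norm_num)

lemma ratio_nonneg : 0 ≤ ratio := Real.sqrt_nonneg _

lemma ratio_lt_one : ratio < 1 := by nlinarith [ratio_sq, ratio_nonneg]

lemma sideValue_mem_Icc : sideValue ∈ Icc (0 : ℝ) 1 := by
  have hd : 0 ≤ 6 * ratio - 18 / 5 := by nlinarith [ratio_sq, ratio_nonneg]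
  have hsq := Real.sq_sqrt hd
  have := Real.sqrt_nonneg (6 * ratio - 18 / 5)
  constructor <;> simp only [sideValue] <;> nlinarith [ratio_sq, ratio_nonneg, ratio_lt_one]

lemma sideValue_spec :
    (1 - ratio) ^ 2 + (1 - sideValue) ^ 2 + (sideValue - ratio) ^ 2 = ratio ^ 2 := by
  have hd : 0 ≤ 6 * ratio - 18 / 5 := by nlinarith [ratio_sq, ratio_nonneg]
  have hsq := Real.sq_sqrt hd
  simp only [sideValue]
  linear_combination (1 / 2) * hsq + (1 / 2) * ratio_sq

lemma rootAmplitude_sq : rootAmplitude ^ 2 = 3 / 10 := Real.sq_sqrt (by norm_num)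

lemma sqrt_le_ratio_mul_sqrt {x y : ℝ} (h : x ≤ 3 / 5 * y) : √x ≤ ratio * √y := by
  rw [ratio, ← Real.sqrt_mul (by norm_num)]
  exact Real.sqrt_le_sqrt h

lemma cellEnergy_spine (a : ℝ) : cellEnergy ![0, a, a] = 2 * a ^ 2 := by
  rw [cellEnergy_eq]
  simp only [Matrix.cons_val_zero, Matrix.cons_val_one, Matrix.cons_val]
  ring

lemma cellEnergy_side_left (a : ℝ) :
    cellEnergy ![ratio * a, a, sideValue * a] = 3 / 5 * a ^ 2 := by
  rw [cellEnergy_eq]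
  simp only [Matrix.cons_val_zero, Matrix.cons_val_one, Matrix.cons_val]
  linear_combination a ^ 2 * sideValue_spec + a ^ 2 * ratio_sq

lemma cellEnergy_side_right (a : ℝ) :
    cellEnergy ![ratio * a, sideValue * a, a] = 3 / 5 * a ^ 2 := by
  rw [cellEnergy_eq]
  simp only [Matrix.cons_val_zero, Matrix.cons_val_one, Matrix.cons_val]
  linear_combination a ^ 2 * sideValue_spec + a ^ 2 * ratio_sq

/-- `root` is `K` itself, `spine a` a corner cell `f₀ⁿ K` with `n ≥ 1` and corner values `0, a, a`,
and `harmonic g` a cell on which the function is harmonic with corner values `g`. -/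
inductive SpineState
  | root
  | spine (a : ℝ)
  | harmonic (g : Fin 3 → ℝ)

namespace SpineState

noncomputable def val : SpineState → Fin 3 → ℝ
  | root => ![0, rootAmplitude, rootAmplitude]
  | spine a => ![0, a, a]
  | harmonic g => g

noncomputable def step : SpineState → Fin 3 → SpineState
  | root => ![spine rootAmplitude, harmonic fun _ => rootAmplitude, harmonic fun _ => rootAmplitude]
  | spine a => ![spine (ratio * a), harmonic ![ratio * a, a, sideValue * a],
      harmonic ![ratio * a, sideValue * a, a]]
  | harmonic g => fun i => harmonic (harmonicStep g i)

/-- The energy does not drop from `root` to its corner cell, so `root` gets a larger bound. -/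
noncomputable def bound : SpineState → ℝ
  | root => 1
  | spine a => √(cellEnergy ![0, a, a])
  | harmonic g => √(cellEnergy g)

lemma val_step_self (s : SpineState) (i : Fin 3) : (s.step i).val i = s.val i := by
  cases s <;> fin_cases i <;> simp [val, step, harmonicStep_self]

lemma val_step_comm (s : SpineState) (i j : Fin 3) : (s.step i).val j = (s.step j).val i := by
  cases s with
  | harmonic g => exact harmonicStep_comm g i j
  | _ => fin_cases i <;> fin_cases j <;> simp [val, step]

lemma abs_val_step_sub_le (s : SpineState) (i k : Fin 3) :
    |(s.step i).val k - (s.val i + s.val k) / 2| ≤ s.bound := by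
  cases s with
  | root =>
    have h0 : 0 ≤ rootAmplitude := Real.sqrt_nonneg _
    have h1 : rootAmplitude ≤ 1 := by nlinarith [rootAmplitude_sq]
    fin_cases i <;> fin_cases k <;> simp [val, step, bound, abs_le] <;> constructor <;> linarith
  | spine a =>
    obtain ⟨ht0, ht1⟩ := sideValue_mem_Icc
    have hr : (ratio - 1 / 2) ^ 2 ≤ 2 := by nlinarith [ratio_nonneg, ratio_lt_one]
    have ht : (sideValue - 1) ^ 2 ≤ 2 := by nlinarith
    apply Real.abs_le_sqrt
    fin_cases i <;> fin_cases k <;> simp [val, step, cellEnergy_eq] <;>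
      nlinarith [mul_le_mul_of_nonneg_right hr (sq_nonneg a),
        mul_le_mul_of_nonneg_right ht (sq_nonneg a)]
  | harmonic g => exact abs_harmonicStep_sub_le g i k

lemma bound_step_le (s : SpineState) (i : Fin 3) : (s.step i).bound ≤ ratio * s.bound := by
  cases s with
  | root =>
    fin_cases i <;> simp [step, bound, rootAmplitude_sq, cellEnergy_eq, ratio_nonneg]
    norm_num [ratio]
  | spine a =>
    fin_cases i <;> simp only [step, bound] <;> apply sqrt_le_ratio_mul_sqrt <;>
      simp [cellEnergy_spine, cellEnergy_side_left, cellEnergy_side_right, mul_pow, ratio_sq] <;>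
      nlinarith [sq_nonneg a]
  | harmonic g => exact sqrt_le_ratio_mul_sqrt (cellEnergy_harmonicStep_le g i)

end SpineState

noncomputable def spineSystem : CellSystem SpineState where
  val := SpineState.val
  step := SpineState.step
  val_step_self := SpineState.val_step_self
  val_step_comm := SpineState.val_step_comm
  bound := SpineState.bound
  rate := ratio
  rate_nonneg := ratio_nonneg
  rate_lt_one := ratio_lt_one
  abs_val_step_sub_le := SpineState.abs_val_step_sub_le
  bound_step_le := SpineState.bound_step_le

lemma energy_harmonic (g : Fin 3 → ℝ) (n : ℕ) :
    spineSystem.energy (.harmonic g) n = (3 / 5) ^ n * cellEnergy g := by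
  induction n generalizing g with
  | zero => simp [CellSystem.energy_zero, spineSystem, SpineState.val]
  | succ n ih =>
    simp only [CellSystem.energy_succ, spineSystem, SpineState.step] at ih ⊢
    simp only [ih, ← Finset.mul_sum, sum_cellEnergy_harmonicStep]
    ring

lemma energy_spine (a : ℝ) (n : ℕ) :
    spineSystem.energy (.spine a) n = 2 * (n + 1) * (3 / 5) ^ n * a ^ 2 := by
  induction n generalizing a with
  | zero => simp [CellSystem.energy_zero, spineSystem, SpineState.val, cellEnergy_spine]
  | succ n ih =>
    rw [CellSystem.energy_succ, Fin.sum_univ_three]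
    change spineSystem.energy (.spine (ratio * a)) n
      + spineSystem.energy (.harmonic ![ratio * a, a, sideValue * a]) n
      + spineSystem.energy (.harmonic ![ratio * a, sideValue * a, a]) n = _
    rw [ih, energy_harmonic, energy_harmonic, cellEnergy_side_left, cellEnergy_side_right, mul_pow,
      ratio_sq]
    push_cast
    ring

lemma energy_root (n : ℕ) : spineSystem.energy .root (n + 1) = (n + 1) * (3 / 5) ^ (n + 1) := by
  rw [CellSystem.energy_succ, Fin.sum_univ_three]
  change spineSystem.energy (.spine rootAmplitude) n
    + spineSystem.energy (.harmonic fun _ => rootAmplitude) n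
    + spineSystem.energy (.harmonic fun _ => rootAmplitude) n = _
  rw [energy_spine, energy_harmonic, cellEnergy_const, rootAmplitude_sq]
  ring

end SG

/-- There exists a continuous function `u : K → ℝ` on the Sierpiński gasket
with `a_n(u) = n` for every `n ≥ 1`. -/
theorem stmt_2 :
    ∃ u : ℝ × ℝ → ℝ, ContinuousOn u SG.K ∧ ∀ n : ℕ, 1 ≤ n → SG.a n u = n := by
  refine ⟨SG.spineSystem.extend .root, SG.spineSystem.continuousOn_extend _, fun n hn => ?_⟩
  obtain ⟨n, rfl⟩ := Nat.exists_eq_add_of_le' hn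
  rw [SG.CellSystem.a_extend, SG.energy_root, mul_left_comm, ← mul_pow]
  norm_num
end

section
/- There exists a unique continuous, strictly increasing function f : [0,1] → ℝ with f(0) = 0 and f(1) = 1 such that for every integer n ≥ 0 and every i ∈ {0, 1, …, 3^n − 1}: f((3i+1)/3^{n+1}) = (5/7)·f(i/3^n) + (2/7)·f((i+1)/3^n) and f((3i+2)/3^{n+1}) = (2/7)·f(i/3^n) + (5/7)·f((i+1)/3^n). -/
/-!
The recursion determines the values on the triadic grid `i / 3 ^ n`: passing from level `n` to
level `n + 1` splits each step of the grid into three steps that are `2/7`, `3/7` and `2/7` of it.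
Hence every step at level `n` lies between `(2/7) ^ n` and `(3/7) ^ n`. Extending the grid values
by suprema from below gives a function that is strictly increasing (the steps are positive) and
continuous (the steps are uniformly small). Any other continuous solution agrees with it on the
grid, which is dense in `[0,1]`.
-/

open Set

/-- `triadicValue n i` is the value of the function at `i / 3 ^ n`; it is `1` for `i ≥ 3 ^ n`. -/
noncomputable def triadicValue : ℕ → ℕ → ℝ
  | 0, i => if i = 0 then 0 else 1
  | n + 1, j =>
      if j % 3 = 0 then triadicValue n (j / 3)
      else if j % 3 = 1 then 5 / 7 * triadicValue n (j / 3) + 2 / 7 * triadicValue n (j / 3 + 1)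
      else 2 / 7 * triadicValue n (j / 3) + 5 / 7 * triadicValue n (j / 3 + 1)

lemma triadicValue_zero_right (n : ℕ) : triadicValue n 0 = 0 := by
  induction n with
  | zero => simp [triadicValue]
  | succ n ih => simp [triadicValue, ih]

lemma triadicValue_zero_one : triadicValue 0 1 = 1 := by
  simp [triadicValue]

lemma triadicValue_three_mul (n i : ℕ) : triadicValue (n + 1) (3 * i) = triadicValue n i := by
  simp [triadicValue]

lemma triadicValue_three_mul_add_one (n i : ℕ) :
    triadicValue (n + 1) (3 * i + 1) =
      5 / 7 * triadicValue n i + 2 / 7 * triadicValue n (i + 1) := by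
  simp [triadicValue, show (3 * i + 1) % 3 = 1 by omega, show (3 * i + 1) / 3 = i by omega]

lemma triadicValue_three_mul_add_two (n i : ℕ) :
    triadicValue (n + 1) (3 * i + 2) =
      2 / 7 * triadicValue n i + 5 / 7 * triadicValue n (i + 1) := by
  simp [triadicValue, show (3 * i + 2) % 3 = 2 by omega, show (3 * i + 2) / 3 = i by omega]

lemma exists_eq_three_mul_add (j : ℕ) : ∃ q, j = 3 * q ∨ j = 3 * q + 1 ∨ j = 3 * q + 2 :=
  ⟨j / 3, by omega⟩

lemma triadicValue_of_pow_le {n i : ℕ} (h : 3 ^ n ≤ i) : triadicValue n i = 1 := by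
  induction n generalizing i with
  | zero => simp [triadicValue]; omega
  | succ n ih =>
    obtain ⟨q, rfl | rfl | rfl⟩ := exists_eq_three_mul_add i <;> rw [pow_succ] at h
    · rw [triadicValue_three_mul, ih (by omega)]
    · rw [triadicValue_three_mul_add_one, ih (by omega), ih (by omega)]; norm_num
    · rw [triadicValue_three_mul_add_two, ih (by omega), ih (by omega)]; norm_num

lemma exists_triadicValue_succ_sub_eq (n j : ℕ) :
    ∃ c ∈ Icc (2 / 7 : ℝ) (3 / 7), triadicValue (n + 1) (j + 1) - triadicValue (n + 1) j =
      c * (triadicValue n (j / 3 + 1) - triadicValue n (j / 3)) := by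
  obtain ⟨q, rfl | rfl | rfl⟩ := exists_eq_three_mul_add j
  · refine ⟨2 / 7, by norm_num, ?_⟩
    rw [triadicValue_three_mul_add_one, triadicValue_three_mul, show 3 * q / 3 = q by omega]
    ring
  · refine ⟨3 / 7, by norm_num, ?_⟩
    rw [triadicValue_three_mul_add_two, triadicValue_three_mul_add_one,
      show (3 * q + 1) / 3 = q by omega]
    ring
  · refine ⟨2 / 7, by norm_num, ?_⟩
    rw [show 3 * q + 2 + 1 = 3 * (q + 1) by ring, triadicValue_three_mul,
      triadicValue_three_mul_add_two, show (3 * q + 2) / 3 = q by omega]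
    ring

lemma triadicValue_sub_nonneg (n i : ℕ) : 0 ≤ triadicValue n (i + 1) - triadicValue n i := by
  induction n generalizing i with
  | zero => rcases i with _ | i <;> simp [triadicValue]
  | succ n ih =>
    obtain ⟨c, hc, h⟩ := exists_triadicValue_succ_sub_eq n i
    rw [h]
    exact mul_nonneg (by linarith [hc.1]) (ih _)

lemma triadicValue_sub_le (n i : ℕ) :
    triadicValue n (i + 1) - triadicValue n i ≤ (3 / 7) ^ n := by
  induction n generalizing i with
  | zero => rcases i with _ | i <;> simp [triadicValue]
  | succ n ih =>
    obtain ⟨c, hc, h⟩ := exists_triadicValue_succ_sub_eq n i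
    rw [h, pow_succ']
    exact mul_le_mul hc.2 (ih _) (triadicValue_sub_nonneg _ _) (by norm_num)

lemma pow_le_triadicValue_sub {n i : ℕ} (hi : i < 3 ^ n) :
    (2 / 7) ^ n ≤ triadicValue n (i + 1) - triadicValue n i := by
  induction n generalizing i with
  | zero =>
    obtain rfl : i = 0 := by omega
    simp [triadicValue]
  | succ n ih =>
    obtain ⟨c, hc, h⟩ := exists_triadicValue_succ_sub_eq n i
    rw [h, pow_succ']
    exact mul_le_mul hc.1 (ih (by rw [pow_succ] at hi; omega)) (by positivity)
      (by linarith [hc.1])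

lemma triadicValue_monotone (n : ℕ) : Monotone (triadicValue n) :=
  monotone_nat_of_le_succ fun i => by linarith [triadicValue_sub_nonneg n i]

lemma triadicValue_le_one (n i : ℕ) : triadicValue n i ≤ 1 :=
  calc triadicValue n i ≤ triadicValue n (max i (3 ^ n)) :=
        triadicValue_monotone n (le_max_left _ _)
    _ = 1 := triadicValue_of_pow_le (le_max_right _ _)

lemma triadicValue_add_mul_pow (n i k : ℕ) :
    triadicValue (n + k) (i * 3 ^ k) = triadicValue n i := by
  induction k with
  | zero => simp
  | succ k ih => rw [← add_assoc, show i * 3 ^ (k + 1) = 3 * (i * 3 ^ k) by ring,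
      triadicValue_three_mul, ih]

lemma triadicValue_le_of_div_le {m i n j : ℕ} (h : (i : ℝ) / 3 ^ m ≤ j / 3 ^ n) :
    triadicValue m i ≤ triadicValue n j := by
  have hij : i * 3 ^ n ≤ j * 3 ^ m := by
    rw [div_le_div_iff₀ (by positivity) (by positivity)] at h
    exact_mod_cast h
  calc triadicValue m i = triadicValue (m + n) (i * 3 ^ n) := (triadicValue_add_mul_pow m i n).symm
    _ ≤ triadicValue (n + m) (j * 3 ^ m) := add_comm m n ▸ triadicValue_monotone _ hij
    _ = triadicValue n j := triadicValue_add_mul_pow n j m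

noncomputable def selfSimilarFun (x : ℝ) : ℝ :=
  sSup {y | ∃ n i : ℕ, (i : ℝ) / 3 ^ n ≤ x ∧ y = triadicValue n i}

lemma triadicValue_le_selfSimilarFun {x : ℝ} {n i : ℕ} (h : (i : ℝ) / 3 ^ n ≤ x) :
    triadicValue n i ≤ selfSimilarFun x :=
  le_csSup ⟨1, by rintro y ⟨m, j, -, rfl⟩; exact triadicValue_le_one m j⟩ ⟨n, i, h, rfl⟩

lemma selfSimilarFun_le_triadicValue {x : ℝ} {n j : ℕ} (hx : 0 ≤ x)
    (h : x ≤ (j : ℝ) / 3 ^ n) :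
    selfSimilarFun x ≤ triadicValue n j :=
  csSup_le ⟨triadicValue 0 0, 0, 0, by simpa using hx, rfl⟩ <| by
    rintro y ⟨m, i, hi, rfl⟩
    exact triadicValue_le_of_div_le (hi.trans h)

lemma selfSimilarFun_div_pow (n i : ℕ) : selfSimilarFun ((i : ℝ) / 3 ^ n) = triadicValue n i :=
  (selfSimilarFun_le_triadicValue (by positivity) le_rfl).antisymm
    (triadicValue_le_selfSimilarFun le_rfl)

lemma selfSimilarFun_zero : selfSimilarFun 0 = 0 := by
  simpa [triadicValue_zero_right] using selfSimilarFun_div_pow 0 0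

lemma selfSimilarFun_one : selfSimilarFun 1 = 1 := by
  simpa [triadicValue_zero_one] using selfSimilarFun_div_pow 0 1

def IsSelfSimilar (g : ℝ → ℝ) : Prop :=
  ∀ n : ℕ, ∀ i : ℕ, i < 3 ^ n →
    g ((3 * i + 1) / 3 ^ (n + 1)) = 5 / 7 * g (i / 3 ^ n) + 2 / 7 * g ((i + 1) / 3 ^ n) ∧
      g ((3 * i + 2) / 3 ^ (n + 1)) = 2 / 7 * g (i / 3 ^ n) + 5 / 7 * g ((i + 1) / 3 ^ n)

lemma isSelfSimilar_selfSimilarFun : IsSelfSimilar selfSimilarFun := by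
  intro n i _
  rw [show (3 * i + 1 : ℝ) = (3 * i + 1 : ℕ) by norm_cast,
    show (3 * i + 2 : ℝ) = (3 * i + 2 : ℕ) by norm_cast,
    show (i + 1 : ℝ) = (i + 1 : ℕ) by norm_cast]
  simp only [selfSimilarFun_div_pow, triadicValue_three_mul_add_one, triadicValue_three_mul_add_two,
    and_self]

lemma selfSimilarFun_sub_le {x y : ℝ} {n : ℕ} (hx : 0 ≤ x) (hxy : x ≤ y)
    (h : y - x ≤ 1 / 3 ^ n) :
    selfSimilarFun y - selfSimilarFun x ≤ 2 * (3 / 7) ^ n := by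
  set i := ⌊3 ^ n * x⌋₊
  have h3 : (0 : ℝ) < 3 ^ n := by positivity
  have hi : (i : ℝ) / 3 ^ n ≤ x := by
    rw [div_le_iff₀ h3, mul_comm]; exact Nat.floor_le (by positivity)
  have hy : y ≤ ((i + 2 : ℕ) : ℝ) / 3 ^ n := by
    rw [le_div_iff₀ h3]
    rw [le_div_iff₀ h3] at h
    push_cast
    linarith [Nat.lt_floor_add_one (3 ^ n * x)]
  have := selfSimilarFun_le_triadicValue (hx.trans hxy) hy
  linarith [triadicValue_le_selfSimilarFun hi, triadicValue_sub_le n i,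
    triadicValue_sub_le n (i + 1)]

lemma exists_div_pow_three_between {x y : ℝ} (hx : 0 ≤ x) (hxy : x < y) :
    ∃ n i : ℕ, x ≤ i / 3 ^ n ∧ ((i + 1 : ℕ) : ℝ) / 3 ^ n ≤ y := by
  obtain ⟨n, hn⟩ : ∃ n : ℕ, (1 / 3 : ℝ) ^ n < (y - x) / 2 :=
    exists_pow_lt_of_lt_one (by linarith) (by norm_num)
  have h3 : (0 : ℝ) < 3 ^ n := by positivity
  rw [div_pow, one_pow, div_lt_iff₀ h3] at hn
  refine ⟨n, ⌈3 ^ n * x⌉₊, ?_, ?_⟩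
  · rw [le_div_iff₀ h3, mul_comm]; exact Nat.le_ceil _
  · rw [div_le_iff₀ h3]
    push_cast
    nlinarith [Nat.ceil_lt_add_one (by positivity : 0 ≤ 3 ^ n * x)]

lemma strictMonoOn_selfSimilarFun : StrictMonoOn selfSimilarFun (Icc 0 1) := by
  intro x hx y hy hxy
  obtain ⟨n, i, hxi, hiy⟩ := exists_div_pow_three_between hx.1 hxy
  have hi : i + 1 ≤ 3 ^ n := by
    exact_mod_cast (div_le_one (by positivity)).1 (hiy.trans hy.2)
  calc selfSimilarFun x ≤ triadicValue n i := selfSimilarFun_le_triadicValue hx.1 hxi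
    _ < triadicValue n (i + 1) := by
      linarith [pow_le_triadicValue_sub hi, pow_pos (by norm_num : (0 : ℝ) < 2 / 7) n]
    _ ≤ selfSimilarFun y := triadicValue_le_selfSimilarFun hiy

lemma continuousOn_selfSimilarFun : ContinuousOn selfSimilarFun (Icc 0 1) := by
  rw [Metric.continuousOn_iff]
  intro x hx ε hε
  obtain ⟨n, hn⟩ : ∃ n : ℕ, (3 / 7 : ℝ) ^ n < ε / 2 :=
    exists_pow_lt_of_lt_one (by positivity) (by norm_num)
  refine ⟨1 / 3 ^ n, by positivity, fun y hy hxy => ?_⟩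
  rw [Real.dist_eq, abs_sub_lt_iff] at hxy
  rw [Real.dist_eq, abs_sub_lt_iff]
  have hmono := strictMonoOn_selfSimilarFun.monotoneOn
  rcases le_total x y with h | h
  · have := selfSimilarFun_sub_le hx.1 h hxy.1.le
    have := hmono hx hy h
    constructor <;> linarith
  · have := selfSimilarFun_sub_le hy.1 h hxy.2.le
    have := hmono hy hx h
    constructor <;> linarith

lemma IsSelfSimilar.apply_div_pow {g : ℝ → ℝ} (hg : IsSelfSimilar g) (hg0 : g 0 = 0)
    (hg1 : g 1 = 1) {n i : ℕ} (hi : i ≤ 3 ^ n) : g (i / 3 ^ n) = triadicValue n i := by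
  induction n generalizing i with
  | zero =>
    obtain rfl | rfl : i = 0 ∨ i = 1 := by omega
    · simpa [triadicValue_zero_right] using hg0
    · simpa [triadicValue_zero_one] using hg1
  | succ n ih =>
    obtain ⟨q, rfl | rfl | rfl⟩ := exists_eq_three_mul_add i <;> rw [pow_succ] at hi
    · rw [triadicValue_three_mul, ← ih (by omega), Nat.cast_mul, pow_succ', Nat.cast_ofNat,
        mul_div_mul_left _ _ three_ne_zero]
    · have := (hg n q (by omega)).1
      push_cast
      rw [this, ih (by omega), show (q + 1 : ℝ) = (q + 1 : ℕ) by norm_cast, ih (by omega),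
        triadicValue_three_mul_add_one]
    · have := (hg n q (by omega)).2
      push_cast
      rw [this, ih (by omega), show (q + 1 : ℝ) = (q + 1 : ℕ) by norm_cast, ih (by omega),
        triadicValue_three_mul_add_two]

def triadicPoints : Set ℝ := {x | ∃ n i : ℕ, i ≤ 3 ^ n ∧ x = i / 3 ^ n}

lemma triadicPoints_subset_Icc : triadicPoints ⊆ Icc 0 1 := by
  rintro _ ⟨n, i, hi, rfl⟩
  exact ⟨by positivity, (div_le_one (by positivity)).2 (by exact_mod_cast hi)⟩

lemma Icc_subset_closure_triadicPoints : Icc 0 1 ⊆ closure triadicPoints := by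
  intro x hx
  rw [Metric.mem_closure_iff]
  intro ε hε
  obtain ⟨n, hn⟩ : ∃ n : ℕ, (1 / 3 : ℝ) ^ n < ε :=
    exists_pow_lt_of_lt_one hε (by norm_num)
  have h3 : (0 : ℝ) < 3 ^ n := by positivity
  rw [div_pow, one_pow, div_lt_iff₀ h3] at hn
  have hx3 : 0 ≤ 3 ^ n * x := mul_nonneg h3.le hx.1
  have hfloor : ⌊3 ^ n * x⌋₊ ≤ 3 ^ n := by
    exact_mod_cast (Nat.floor_le hx3).trans (mul_le_of_le_one_right h3.le hx.2)
  have hlo : (⌊3 ^ n * x⌋₊ : ℝ) / 3 ^ n ≤ x :=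
    (div_le_iff₀ h3).2 (by linarith [Nat.floor_le hx3])
  have hhi : x - ε < ⌊3 ^ n * x⌋₊ / 3 ^ n :=
    (lt_div_iff₀ h3).2 (by nlinarith [Nat.lt_floor_add_one (3 ^ n * x)])
  refine ⟨⌊3 ^ n * x⌋₊ / 3 ^ n, ⟨n, _, hfloor, rfl⟩, ?_⟩
  rw [Real.dist_eq, abs_sub_lt_iff]
  constructor <;> linarith

lemma IsSelfSimilar.eqOn_selfSimilarFun {g : ℝ → ℝ} (hg : IsSelfSimilar g)
    (hgc : ContinuousOn g (Icc 0 1)) (hg0 : g 0 = 0) (hg1 : g 1 = 1) :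
    EqOn selfSimilarFun g (Icc 0 1) := by
  refine EqOn.of_subset_closure ?_ continuousOn_selfSimilarFun hgc triadicPoints_subset_Icc
    Icc_subset_closure_triadicPoints
  rintro _ ⟨n, i, hi, rfl⟩
  rw [selfSimilarFun_div_pow, hg.apply_div_pow hg0 hg1 hi]

/-- There is a unique continuous strictly increasing `f : [0,1] → ℝ` with
`f(0) = 0`, `f(1) = 1`, satisfying the self-similar identities
`f((3i+1)/3^{n+1}) = (5/7)f(i/3^n) + (2/7)f((i+1)/3^n)` and
`f((3i+2)/3^{n+1}) = (2/7)f(i/3^n) + (5/7)f((i+1)/3^n)`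
for all `n ≥ 0` and `0 ≤ i ≤ 3^n − 1`. Uniqueness is expressed as equality
on `[0,1]` of any two functions `ℝ → ℝ` with these properties. -/
theorem stmt_5 :
    ∃ f : ℝ → ℝ,
      (ContinuousOn f (Set.Icc 0 1) ∧ StrictMonoOn f (Set.Icc 0 1) ∧
        f 0 = 0 ∧ f 1 = 1 ∧
        ∀ n : ℕ, ∀ i : ℕ, i < 3 ^ n →
          f ((3 * i + 1) / 3 ^ (n + 1))
              = 5 / 7 * f (i / 3 ^ n) + 2 / 7 * f ((i + 1) / 3 ^ n) ∧
            f ((3 * i + 2) / 3 ^ (n + 1))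
              = 2 / 7 * f (i / 3 ^ n) + 5 / 7 * f ((i + 1) / 3 ^ n)) ∧
      ∀ g : ℝ → ℝ,
        (ContinuousOn g (Set.Icc 0 1) ∧ StrictMonoOn g (Set.Icc 0 1) ∧
          g 0 = 0 ∧ g 1 = 1 ∧
          ∀ n : ℕ, ∀ i : ℕ, i < 3 ^ n →
            g ((3 * i + 1) / 3 ^ (n + 1))
                = 5 / 7 * g (i / 3 ^ n) + 2 / 7 * g ((i + 1) / 3 ^ n) ∧
              g ((3 * i + 2) / 3 ^ (n + 1))
                = 2 / 7 * g (i / 3 ^ n) + 5 / 7 * g ((i + 1) / 3 ^ n)) →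
        Set.EqOn f g (Set.Icc 0 1) := by
  refine ⟨selfSimilarFun, ⟨continuousOn_selfSimilarFun, strictMonoOn_selfSimilarFun,
    selfSimilarFun_zero, selfSimilarFun_one, isSelfSimilar_selfSimilarFun⟩, ?_⟩
  rintro g ⟨hgc, -, hg0, hg1, hg⟩
  exact IsSelfSimilar.eqOn_selfSimilarFun hg hgc hg0 hg1
end

section
/- For every unbounded subset S of [0,∞) there exist a sequence (λ_k)_{k≥0} of elements of S and positive real numbers (c_k)_{k≥0} such that Σ_{k} c_k < ∞, Σ_{k} c_k λ_k = ∞, and Σ_{k} c_k λ_k^δ < ∞ for every δ ∈ (0,1). -/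
/-!
Pick `λ_k ∈ S` with `λ_k > 2^k` and put `c_k = 1 / ((k+1) λ_k)`. Then `c_k λ_k = 1/(k+1)` is
the harmonic series, while for `δ < 1` the terms `c_k λ_k^δ ≤ λ_k^(δ-1) ≤ (2^(δ-1))^k` are
dominated by a convergent geometric series; `δ = 0` gives `Σ c_k < ∞`.
-/

lemma summable_rpow_of_pow_le {r s : ℝ} (hr : 1 < r) (hs : s < 0) {lam : ℕ → ℝ}
    (hlam : ∀ k, r ^ k ≤ lam k) : Summable fun k => lam k ^ s := by
  have hr0 : 0 < r := one_pos.trans hr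
  have hgeom : Summable fun k : ℕ => (r ^ s) ^ k :=
    summable_geometric_of_lt_one (Real.rpow_nonneg hr0.le s)
      (Real.rpow_lt_one_of_one_lt_of_neg hr hs)
  refine hgeom.of_nonneg_of_le (fun k => Real.rpow_nonneg ((pow_pos hr0 k).le.trans (hlam k)) s)
    fun k => ?_
  calc lam k ^ s ≤ (r ^ k) ^ s := Real.rpow_le_rpow_of_nonpos (pow_pos hr0 k) (hlam k) hs.le
    _ = (r ^ s) ^ k := by rw [← Real.rpow_natCast, ← Real.rpow_mul hr0.le, mul_comm,
        Real.rpow_mul hr0.le, Real.rpow_natCast]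

lemma summable_inv_mul_rpow_of_pow_le {r δ : ℝ} (hr : 1 < r) (hδ : δ < 1) {lam : ℕ → ℝ}
    (hlam : ∀ k, r ^ k ≤ lam k) :
    Summable fun k : ℕ => ((k + 1) * lam k)⁻¹ * lam k ^ δ := by
  have hpos : ∀ k, 0 < lam k := fun k => (pow_pos (one_pos.trans hr) k).trans_le (hlam k)
  refine (summable_rpow_of_pow_le hr (sub_neg.mpr hδ) hlam).of_nonneg_of_le
    (fun k => by have := hpos k; positivity) fun k => ?_
  have hk : (1 : ℝ) ≤ k + 1 := le_add_of_nonneg_left k.cast_nonneg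
  calc ((k + 1) * lam k)⁻¹ * lam k ^ δ = (k + 1 : ℝ)⁻¹ * lam k ^ (δ - 1) := by
        rw [Real.rpow_sub_one (hpos k).ne', mul_inv, div_eq_mul_inv]; ring
    _ ≤ lam k ^ (δ - 1) :=
        mul_le_of_le_one_left (Real.rpow_nonneg (hpos k).le _) (inv_le_one_of_one_le₀ hk)

lemma not_summable_inv_mul_self {lam : ℕ → ℝ} (hlam : ∀ k, lam k ≠ 0) :
    ¬Summable fun k : ℕ => ((k + 1) * lam k)⁻¹ * lam k := by
  have harmonic :
      (fun k : ℕ => ((k + 1) * lam k)⁻¹ * lam k) = fun k : ℕ => 1 / ((k + 1 : ℕ) : ℝ) := by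
    funext k
    rw [mul_inv, inv_mul_cancel_right₀ (hlam k)]
    push_cast
    exact (one_div _).symm
  rw [harmonic]
  exact (summable_nat_add_iff 1).not.mpr Real.not_summable_one_div_natCast

theorem stmt_11_general (S : Set ℝ) (hunb : ¬BddAbove S) :
    ∃ (lam : ℕ → ℝ) (c : ℕ → ℝ),
      (∀ k, lam k ∈ S) ∧ (∀ k, 0 < c k) ∧
      Summable c ∧
      ¬Summable (fun k => c k * lam k) ∧
      ∀ δ ∈ Set.Ioo (0 : ℝ) 1, Summable (fun k => c k * lam k ^ δ) := by
  choose lam hmem hlt using fun k : ℕ => not_bddAbove_iff.mp hunb ((2 : ℝ) ^ k)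
  have hge : ∀ k, (2 : ℝ) ^ k ≤ lam k := fun k => (hlt k).le
  have hpos : ∀ k, 0 < lam k := fun k => (pow_pos two_pos k).trans (hlt k)
  refine ⟨lam, fun k => ((k + 1) * lam k)⁻¹, hmem, fun k => by have := hpos k; positivity,
    ?_, not_summable_inv_mul_self fun k => (hpos k).ne',
    fun δ hδ => summable_inv_mul_rpow_of_pow_le one_lt_two hδ.2 hge⟩
  simpa using summable_inv_mul_rpow_of_pow_le one_lt_two one_pos hge

/-- For every unbounded subset `S` of `[0,∞)` there are `λ_k ∈ S` and weights
`c_k > 0` with `Σ c_k < ∞`, `Σ c_k λ_k = ∞`, and `Σ c_k λ_k^δ < ∞` for every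
`δ ∈ (0,1)`. -/
theorem stmt_11 (S : Set ℝ) (hS : S ⊆ Set.Ici (0 : ℝ)) (hunb : ¬BddAbove S) :
    ∃ (lam : ℕ → ℝ) (c : ℕ → ℝ),
      (∀ k, lam k ∈ S) ∧ (∀ k, 0 < c k) ∧
      Summable c ∧
      ¬Summable (fun k => c k * lam k) ∧
      ∀ δ ∈ Set.Ioo (0 : ℝ) 1, Summable (fun k => c k * lam k ^ δ) :=
  stmt_11_general S hunb
end

section
/- Let (K, d, ν) be a metric measure space, α > 0, and C ≥ 1 a constant with (1/C)·r^α ≤ ν(B(x,r)) ≤ C·r^α for every x ∈ K and every r ∈ (0, diam K), where B(x,r) is the open ball and diam K ∈ (0, ∞] is the diameter of K. Let c = 2·C^{2/α}. Then for every x ∈ K and every r ∈ (0, diam K / c), the annulus B(x, c·r) \ B(x, r) is nonempty. -/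
open MeasureTheory Metric Set

/-!
If the annulus `B(x, c r) \ B(x, r)` were empty, the two balls would have the same measure.
But by regularity `ν(B(x, c r)) ≥ C⁻¹ (c r)^α = 2^α C r^α > C r^α ≥ ν(B(x, r))`; the choice
`c = 2 C^{2/α}` is exactly what makes the factor `C^{-1} c^α` beat `C`.
-/

lemma MeasureTheory.sdiff_nonempty_of_measure_lt {X : Type*} [MeasurableSpace X] {μ : Measure X}
    {s t : Set X} (h : μ t < μ s) : (s \ t).Nonempty :=
  Set.sdiff_nonempty.2 fun hst => (measure_mono hst).not_gt h

lemma inv_mul_rpow_two_mul_rpow_two_div {α C r : ℝ} (hα : 0 < α) (hC : 0 < C) (hr : 0 ≤ r) :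
    1 / C * (2 * C ^ (2 / α) * r) ^ α = 2 ^ α * C * r ^ α := by
  rw [Real.mul_rpow (by positivity) hr, Real.mul_rpow zero_le_two (by positivity),
    ← Real.rpow_mul hC.le, div_mul_cancel₀ _ hα.ne', Real.rpow_two]
  field_simp

lemma mul_rpow_lt_inv_mul_rpow_two_mul_rpow_two_div {α C r : ℝ} (hα : 0 < α) (hC : 0 < C)
    (hr : 0 < r) : C * r ^ α < 1 / C * (2 * C ^ (2 / α) * r) ^ α := by
  rw [inv_mul_rpow_two_mul_rpow_two_div hα hC hr.le, mul_assoc]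
  exact lt_mul_of_one_lt_left (by positivity) (Real.one_lt_rpow one_lt_two hα)

theorem stmt_12_general {K : Type*} [MetricSpace K] [MeasurableSpace K]
    (ν : Measure K)
    (α : ℝ) (hα : 0 < α) (C : ℝ) (hC : 1 ≤ C)
    (hreg : ∀ (x : K) (r : ℝ), 0 < r →
      ENNReal.ofReal r < EMetric.diam (Set.univ : Set K) →
      ENNReal.ofReal ((1 / C) * r ^ α) ≤ ν (Metric.ball x r) ∧
        ν (Metric.ball x r) ≤ ENNReal.ofReal (C * r ^ α)) :
    ∀ (x : K) (r : ℝ), 0 < r →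
      ENNReal.ofReal (2 * C ^ (2 / α) * r) < EMetric.diam (Set.univ : Set K) →
      (Metric.ball x (2 * C ^ (2 / α) * r) \ Metric.ball x r).Nonempty := by
  intro x r hr hdiam
  have hC0 : 0 < C := one_pos.trans_le hC
  have hr_lt : r < 2 * C ^ (2 / α) * r := by
    have : 1 ≤ C ^ (2 / α) := Real.one_le_rpow hC (by positivity)
    nlinarith
  apply sdiff_nonempty_of_measure_lt
  calc ν (ball x r)
      ≤ ENNReal.ofReal (C * r ^ α) :=
        (hreg x r hr ((ENNReal.ofReal_le_ofReal hr_lt.le).trans_lt hdiam)).2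
    _ < ENNReal.ofReal (1 / C * (2 * C ^ (2 / α) * r) ^ α) :=
        (ENNReal.ofReal_lt_ofReal_iff (by positivity)).2
          (mul_rpow_lt_inv_mul_rpow_two_mul_rpow_two_div hα hC0 hr)
    _ ≤ ν (ball x (2 * C ^ (2 / α) * r)) := (hreg x _ (hr.trans hr_lt) hdiam).1

/-- The annulus lemma: in an `α`-regular metric measure space with regularity
constant `C ≥ 1`, every annulus `B(x, c·r) \ B(x, r)` with `c = 2·C^{2/α}` and
`0 < r`, `c·r < diam K`, is nonempty. -/
theorem stmt_12 {K : Type*} [MetricSpace K] [MeasurableSpace K] [BorelSpace K] [LocallyCompactSpace K]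
    [TopologicalSpace.SeparableSpace K]
    (ν : Measure K) [IsFiniteMeasureOnCompacts ν] [ν.IsOpenPosMeasure]
    (α : ℝ) (hα : 0 < α) (C : ℝ) (hC : 1 ≤ C)
    (hreg : ∀ (x : K) (r : ℝ), 0 < r →
      ENNReal.ofReal r < EMetric.diam (Set.univ : Set K) →
      ENNReal.ofReal ((1 / C) * r ^ α) ≤ ν (Metric.ball x r) ∧
        ν (Metric.ball x r) ≤ ENNReal.ofReal (C * r ^ α)) :
    ∀ (x : K) (r : ℝ), 0 < r →
      ENNReal.ofReal (2 * C ^ (2 / α) * r) < EMetric.diam (Set.univ : Set K) →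
      (Metric.ball x (2 * C ^ (2 / α) * r) \ Metric.ball x r).Nonempty :=
  stmt_12_general ν α hα C hC hreg
end

section
/- Let α > 0, β > 1, δ ∈ (0,1), C₃ > 0, C₄ > 0, T ∈ (0,∞), and D ∈ (0, T]. Let p : (0,∞) → [0,∞) be measurable and suppose p(t) ≤ C₃·t^{−α/β}·exp(−C₄·(D·t^{−1/β})^{β/(β−1)}) for all t ∈ (0, T^β), and p(t) ≤ C₃·T^{−α} for all t ≥ T^β. Then ∫_0^∞ t^{−(1+δ)} p(t) dt ≤ C·D^{−(α+δβ)}, where C is a constant depending only on α, β, δ, C₃, C₄. -/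
open MeasureTheory Real Set ENNReal

/-!
Split `(0, ∞)` at `D^β ≤ T^β`. On `(0, D^β)` the factor `exp (-C₄ (D^β/t)^{1/(β-1)})` beats every
power of `D^β/t` (concretely `e^{-s} ≤ n!/s^n`), so the integrand is at most a constant times
`(D^β)^{-(1+δ+α/β)}` on an interval of length `D^β`. On `[D^β, T^β)` the exponential is dropped and
`t^{-(1+δ+α/β)}` is integrated up to `∞`; on `[T^β, ∞)` one integrates `t^{-(1+δ)}` and uses
`T^{-(α+δβ)} ≤ D^{-(α+δβ)}`.
-/

theorem rpow_mul_exp_neg_mul_rpow_le {a γ c u : ℝ} (n : ℕ) (hc : 0 < c) (hu : 1 ≤ u)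
    (han : a ≤ γ * n) : u ^ a * exp (-(c * u ^ γ)) ≤ n.factorial / c ^ n := by
  have hu0 : 0 < u := one_pos.trans_le hu
  have hs : 0 < c * u ^ γ := by positivity
  have hexp : exp (-(c * u ^ γ)) ≤ n.factorial / (c * u ^ γ) ^ n := by
    rw [exp_neg, ← inv_div]
    exact inv_anti₀ (by positivity) (pow_div_factorial_le_exp _ hs.le n)
  calc u ^ a * exp (-(c * u ^ γ)) ≤ u ^ a * (n.factorial / (c * u ^ γ) ^ n) :=
        mul_le_mul_of_nonneg_left hexp (by positivity)
    _ = n.factorial / c ^ n * u ^ (a - γ * n) := by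
      rw [mul_pow, ← rpow_natCast (u ^ γ), ← rpow_mul hu0.le, rpow_sub hu0]
      field_simp
    _ ≤ n.factorial / c ^ n := by
      refine mul_le_of_le_one_right (by positivity) ?_
      exact rpow_le_one_of_one_le_of_nonpos hu (by linarith)

theorem rpow_neg_mul_exp_neg_mul_div_rpow_le {a γ c b t : ℝ} (n : ℕ) (hc : 0 < c) (ht : 0 < t)
    (htb : t ≤ b) (han : a ≤ γ * n) :
    t ^ (-a) * exp (-(c * (b / t) ^ γ)) ≤ n.factorial / c ^ n * b ^ (-a) := by
  have hb : 0 < b := ht.trans_le htb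
  have hsplit : t ^ (-a) = (b / t) ^ a * b ^ (-a) := by
    rw [div_rpow hb.le ht.le, rpow_neg hb.le, rpow_neg ht.le]
    field_simp
  rw [hsplit, mul_right_comm]
  gcongr
  exact rpow_mul_exp_neg_mul_rpow_le n hc ((one_le_div ht).2 htb) han

theorem mul_rpow_neg_one_div_rpow_eq {β D t : ℝ} (hβ : β ≠ 0) (hD : 0 ≤ D) (ht : 0 ≤ t) :
    (D * t ^ (-(1 / β))) ^ (β / (β - 1)) = (D ^ β / t) ^ (1 / (β - 1)) := by
  have hexp : -(1 / β) * (β / (β - 1)) = -(1 / (β - 1)) := by field_simp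
  rw [div_rpow (rpow_nonneg hD _) ht, mul_rpow hD (rpow_nonneg ht _), ← rpow_mul hD,
    ← rpow_mul ht, hexp, mul_one_div, rpow_neg ht, ← div_eq_mul_inv]

noncomputable def subGaussianBound (C₃ C₄ α β D t : ℝ) : ℝ :=
  C₃ * t ^ (-(α / β)) * exp (-(C₄ * (D * t ^ (-(1 / β))) ^ (β / (β - 1))))

theorem setLIntegral_Ioo_ofReal_le {f : ℝ → ℝ} {a b M : ℝ} (hM : 0 ≤ M)
    (hf : ∀ t ∈ Ioo a b, f t ≤ M) :
    ∫⁻ t in Ioo a b, ENNReal.ofReal (f t) ≤ ENNReal.ofReal (M * (b - a)) :=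
  calc ∫⁻ t in Ioo a b, ENNReal.ofReal (f t) ≤ ∫⁻ _ in Ioo a b, ENNReal.ofReal M :=
        setLIntegral_mono' measurableSet_Ioo fun t ht ↦ ofReal_le_ofReal (hf t ht)
    _ = ENNReal.ofReal (M * (b - a)) := by
        rw [setLIntegral_const, Real.volume_Ioo, ofReal_mul hM]

theorem setLIntegral_ofReal_le_of_le_mul_rpow {f : ℝ → ℝ} {s : Set ℝ} {c K r : ℝ}
    (hs : MeasurableSet s) (hsc : s ⊆ Ici c) (hc : 0 < c) (hr : 1 < r) (hK : 0 ≤ K)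
    (hf : ∀ t ∈ s, f t ≤ K * t ^ (-r)) :
    ∫⁻ t in s, ENNReal.ofReal (f t) ≤ ENNReal.ofReal (K * (c ^ (1 - r) / (r - 1))) := by
  have hint : IntegrableOn (fun t ↦ K * t ^ (-r)) (Ioi c) :=
    (integrableOn_Ioi_rpow_of_lt (by linarith) hc).const_mul K
  calc ∫⁻ t in s, ENNReal.ofReal (f t) ≤ ∫⁻ t in s, ENNReal.ofReal (K * t ^ (-r)) :=
        setLIntegral_mono' hs fun t ht ↦ ofReal_le_ofReal (hf t ht)
    _ ≤ ∫⁻ t in Ici c, ENNReal.ofReal (K * t ^ (-r)) := lintegral_mono_set hsc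
    _ = ∫⁻ t in Ioi c, ENNReal.ofReal (K * t ^ (-r)) := (setLIntegral_congr Ioi_ae_eq_Ici).symm
    _ = ENNReal.ofReal (∫ t in Ioi c, K * t ^ (-r)) := by
        rw [ofReal_integral_eq_lintegral_ofReal hint]
        filter_upwards [ae_restrict_mem measurableSet_Ioi] with t ht
        exact mul_nonneg hK (rpow_nonneg (hc.trans ht).le _)
    _ = ENNReal.ofReal (K * (c ^ (1 - r) / (r - 1))) := by
        rw [integral_const_mul, integral_Ioi_rpow_of_lt (by linarith) hc, neg_add_eq_sub,
          neg_div, ← div_neg, neg_sub]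

section

variable {C₃ C₄ α β δ D : ℝ}

theorem subGaussianBound_le_rpow {t : ℝ} (hC₃ : 0 ≤ C₃) (hC₄ : 0 ≤ C₄) (hD : 0 ≤ D)
    (ht : 0 ≤ t) : subGaussianBound C₃ C₄ α β D t ≤ C₃ * t ^ (-(α / β)) :=
  mul_le_of_le_one_right (by positivity) (exp_le_one_iff.2 (neg_nonpos.2 (by positivity)))

theorem rpow_mul_subGaussianBound_le {t : ℝ} (n : ℕ) (hβ : 1 < β) (hC₃ : 0 ≤ C₃)
    (hC₄ : 0 < C₄) (hD : 0 ≤ D) (ht : 0 < t) (htD : t ≤ D ^ β)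
    (hn : (1 + δ + α / β) * (β - 1) ≤ n) :
    t ^ (-(1 + δ)) * subGaussianBound C₃ C₄ α β D t ≤
      C₃ * (n.factorial / C₄ ^ n * (D ^ β) ^ (-(1 + δ + α / β))) := by
  have hsplit : t ^ (-(1 + δ + α / β)) = t ^ (-(1 + δ)) * t ^ (-(α / β)) := by
    rw [neg_add, rpow_add ht]
  have hγ : 1 + δ + α / β ≤ 1 / (β - 1) * n := by
    rwa [one_div_mul_eq_div, le_div_iff₀ (by linarith)]
  unfold subGaussianBound
  rw [mul_rpow_neg_one_div_rpow_eq (by linarith) hD ht.le]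
  calc t ^ (-(1 + δ)) * (C₃ * t ^ (-(α / β)) * exp (-(C₄ * (D ^ β / t) ^ (1 / (β - 1)))))
      = C₃ * (t ^ (-(1 + δ + α / β)) * exp (-(C₄ * (D ^ β / t) ^ (1 / (β - 1))))) := by
        rw [hsplit]; ring
    _ ≤ _ := mul_le_mul_of_nonneg_left (rpow_neg_mul_exp_neg_mul_div_rpow_le n hC₄ ht htD hγ) hC₃

theorem setLIntegral_Ioo_rpow_mul_le_of_le_subGaussianBound {p : ℝ → ℝ} (n : ℕ) (hβ : 1 < β)
    (hC₃ : 0 ≤ C₃) (hC₄ : 0 < C₄) (hD : 0 < D) (hn : (1 + δ + α / β) * (β - 1) ≤ n)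
    (hp : ∀ t ∈ Ioo 0 (D ^ β), p t ≤ subGaussianBound C₃ C₄ α β D t) :
    ∫⁻ t in Ioo 0 (D ^ β), ENNReal.ofReal (t ^ (-(1 + δ)) * p t) ≤
      ENNReal.ofReal (C₃ * n.factorial / C₄ ^ n * (D ^ β) ^ (-(δ + α / β))) := by
  refine (setLIntegral_Ioo_ofReal_le
    (M := C₃ * (n.factorial / C₄ ^ n * (D ^ β) ^ (-(1 + δ + α / β)))) (by positivity)
    fun t ht ↦ ?_).trans_eq ?_
  · exact (mul_le_mul_of_nonneg_left (hp t ht) (rpow_nonneg ht.1.le _)).trans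
      (rpow_mul_subGaussianBound_le n hβ hC₃ hC₄ hD.le ht.1 ht.2.le hn)
  · rw [sub_zero, mul_assoc, mul_assoc, ← rpow_add_one (rpow_pos_of_pos hD β).ne', mul_div_assoc]
    ring_nf

theorem setLIntegral_Ico_rpow_mul_le_of_le_subGaussianBound {p : ℝ → ℝ} {T : ℝ} (hC₃ : 0 ≤ C₃)
    (hC₄ : 0 ≤ C₄) (hD : 0 < D) (hδα : 0 < δ + α / β)
    (hp : ∀ t ∈ Ico (D ^ β) T, p t ≤ subGaussianBound C₃ C₄ α β D t) :
    ∫⁻ t in Ico (D ^ β) T, ENNReal.ofReal (t ^ (-(1 + δ)) * p t) ≤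
      ENNReal.ofReal (C₃ / (δ + α / β) * (D ^ β) ^ (-(δ + α / β))) := by
  refine (setLIntegral_ofReal_le_of_le_mul_rpow (r := 1 + δ + α / β) measurableSet_Ico
    Ico_subset_Ici_self (rpow_pos_of_pos hD β) (by linarith) hC₃ fun t ht ↦ ?_).trans_eq ?_
  · have ht0 : 0 < t := (rpow_pos_of_pos hD β).trans_le ht.1
    calc t ^ (-(1 + δ)) * p t ≤ t ^ (-(1 + δ)) * (C₃ * t ^ (-(α / β))) :=
          mul_le_mul_of_nonneg_left
            ((hp t ht).trans (subGaussianBound_le_rpow hC₃ hC₄ hD.le ht0.le)) (rpow_nonneg ht0.le _)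
      _ = C₃ * t ^ (-(1 + δ + α / β)) := by rw [neg_add _ (α / β), rpow_add ht0]; ring
  · ring_nf

theorem setLIntegral_Ici_rpow_mul_le_of_le_const {p : ℝ → ℝ} {T : ℝ} (hα : 0 ≤ α) (hβ : 0 ≤ β)
    (hδ : 0 < δ) (hC₃ : 0 ≤ C₃) (hD : 0 < D) (hDT : D ≤ T)
    (hp : ∀ t, T ^ β ≤ t → p t ≤ C₃ * T ^ (-α)) :
    ∫⁻ t in Ici (T ^ β), ENNReal.ofReal (t ^ (-(1 + δ)) * p t) ≤
      ENNReal.ofReal (C₃ / δ * D ^ (-(α + δ * β))) := by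
  have hT : 0 < T := hD.trans_le hDT
  refine (setLIntegral_ofReal_le_of_le_mul_rpow (K := C₃ * T ^ (-α)) measurableSet_Ici
    subset_rfl (rpow_pos_of_pos hT β) (by linarith : 1 < 1 + δ) (by positivity)
    fun t ht ↦ ?_).trans (ofReal_le_ofReal ?_)
  · rw [mul_comm]
    exact mul_le_mul_of_nonneg_right (hp t ht)
      (rpow_nonneg ((rpow_pos_of_pos hT β).trans_le ht).le _)
  · calc C₃ * T ^ (-α) * ((T ^ β) ^ (1 - (1 + δ)) / (1 + δ - 1))
        = C₃ / δ * T ^ (-(α + δ * β)) := by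
          rw [← rpow_mul hT.le, mul_div_assoc', mul_assoc, ← rpow_add hT]
          ring_nf
      _ ≤ C₃ / δ * D ^ (-(α + δ * β)) := mul_le_mul_of_nonneg_left
          (rpow_le_rpow_of_nonpos hD hDT (neg_nonpos.2 (by positivity))) (by positivity)

end

/-- Upper bound for the subordinated jumping kernel integral in case (a)
(bounded diameter): if `p(t) ≤ C₃·t^{−α/β}·exp(−C₄·(D·t^{−1/β})^{β/(β−1)})`
for `t ∈ (0, T^β)` and `p(t) ≤ C₃·T^{−α}` for `t ≥ T^β`, then
`∫_0^∞ t^{−(1+δ)} p(t) dt ≤ C·D^{−(α+δβ)}` with `C = C(α,β,δ,C₃,C₄)`. -/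
theorem stmt_18 (α β δ C₃ C₄ : ℝ) (hα : 0 < α) (hβ : 1 < β)
    (hδ : δ ∈ Set.Ioo (0 : ℝ) 1) (hC₃ : 0 < C₃) (hC₄ : 0 < C₄) :
    ∃ C : ℝ, 0 < C ∧
      ∀ (T D : ℝ) (p : ℝ → ℝ), 0 < T → 0 < D → D ≤ T →
        Measurable p → (∀ t, 0 ≤ p t) →
        (∀ t ∈ Set.Ioo (0 : ℝ) (T ^ β),
          p t ≤ C₃ * t ^ (-(α / β)) * Real.exp (-(C₄ * (D * t ^ (-(1 / β))) ^ (β / (β - 1))))) →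
        (∀ t, T ^ β ≤ t → p t ≤ C₃ * T ^ (-α)) →
        (∫⁻ t in Set.Ioi (0 : ℝ), ENNReal.ofReal (t ^ (-(1 + δ)) * p t))
          ≤ ENNReal.ofReal (C * D ^ (-(α + δ * β))) := by
  obtain ⟨hδ0, -⟩ := hδ
  have hδα : 0 < δ + α / β := by have := div_pos hα (by linarith : 0 < β); linarith
  set n := ⌈(1 + δ + α / β) * (β - 1)⌉₊
  refine ⟨C₃ * n.factorial / C₄ ^ n + C₃ / (δ + α / β) + C₃ / δ, by positivity, ?_⟩
  intro T D p _ hD hDT _ _ hnear hfar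
  have hDβ : 0 < D ^ β := rpow_pos_of_pos hD β
  have hDβT : D ^ β ≤ T ^ β := rpow_le_rpow hD.le hDT (by linarith)
  have hexp : (D ^ β) ^ (-(δ + α / β)) = D ^ (-(α + δ * β)) := by
    rw [← rpow_mul hD.le]; congr 1; field_simp; ring
  have h₁ := setLIntegral_Ioo_rpow_mul_le_of_le_subGaussianBound n hβ hC₃.le hC₄ hD
    (Nat.le_ceil _) fun t ht ↦ hnear t ⟨ht.1, ht.2.trans_le hDβT⟩
  have h₂ := setLIntegral_Ico_rpow_mul_le_of_le_subGaussianBound hC₃.le hC₄.le hD hδα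
    fun t ht ↦ hnear t ⟨hDβ.trans_le ht.1, ht.2⟩
  have h₃ := setLIntegral_Ici_rpow_mul_le_of_le_const hα.le (by linarith) hδ0 hC₃.le hD hDT hfar
  rw [hexp] at h₁ h₂
  calc ∫⁻ t in Ioi 0, ENNReal.ofReal (t ^ (-(1 + δ)) * p t)
      = ∫⁻ t in Ioo 0 (D ^ β) ∪ (Ico (D ^ β) (T ^ β) ∪ Ici (T ^ β)),
          ENNReal.ofReal (t ^ (-(1 + δ)) * p t) := by
        rw [Ico_union_Ici_eq_Ici hDβT, Ioo_union_Ici_eq_Ioi hDβ]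
    _ ≤ _ := (lintegral_union_le _ _ _).trans (add_le_add le_rfl (lintegral_union_le _ _ _))
    _ ≤ _ := add_le_add h₁ (add_le_add h₂ h₃)
    _ = _ := by
        rw [← ofReal_add (by positivity) (by positivity),
          ← ofReal_add (by positivity) (by positivity)]
        ring_nf
end

section
/- Let α > 0, β > 1, δ ∈ (0,1), C₁ > 0, C₂ > 0, T ∈ (0,∞), and D ∈ (0, T]. Let p : (0,∞) → [0,∞) be measurable and suppose p(t) ≥ C₁·t^{−α/β}·exp(−C₂·(D·t^{−1/β})^{β/(β−1)}) for all t ∈ (0, T^β). Then ∫_0^∞ t^{−(1+δ)} p(t) dt ≥ c·D^{−(α+δβ)}, where c > 0 is a constant depending only on α, β, δ, C₁, C₂ (in particular independent of T and D). -/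
open MeasureTheory Real Set ENNReal

/-! Integrate only over `t ∈ (D^β/2, D^β) ⊆ (0, T^β)`. There `t^{-(1+δ)} ≥ D^{-β(1+δ)}`,
`t^{-α/β} ≥ D^{-α}`, and the Gaussian exponent `(D t^{-1/β})^{β/(β-1)} = (D^β/t)^{1/(β-1)}` is at
most `2^{1/(β-1)}`. Multiplying by the length `D^β/2` of the interval gives the bound with
`c = C₁ exp(-C₂ 2^{1/(β-1)}) / 2`. -/

lemma ofReal_mul_sub_le_setLIntegral_of_Ioo_subset {f : ℝ → ℝ} {s : Set ℝ} {a b K : ℝ}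
    (hs : Ioo a b ⊆ s) (hK : 0 ≤ K) (hf : ∀ t ∈ Ioo a b, K ≤ f t) :
    ENNReal.ofReal (K * (b - a)) ≤ ∫⁻ t in s, ENNReal.ofReal (f t) :=
  calc ENNReal.ofReal (K * (b - a)) = ∫⁻ _ in Ioo a b, ENNReal.ofReal K := by
        rw [setLIntegral_const, Real.volume_Ioo, ENNReal.ofReal_mul hK]
    _ ≤ ∫⁻ t in Ioo a b, ENNReal.ofReal (f t) :=
        setLIntegral_mono' measurableSet_Ioo fun t ht => ENNReal.ofReal_le_ofReal (hf t ht)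
    _ ≤ ∫⁻ t in s, ENNReal.ofReal (f t) := lintegral_mono_set hs

lemma mul_rpow_neg_inv_rpow_eq {D t β : ℝ} (hD : 0 < D) (ht : 0 < t) (hβ : β ≠ 0) :
    (D * t ^ (-(1 / β))) ^ (β / (β - 1)) = (D ^ β / t) ^ (1 / (β - 1)) := by
  have hDt : D * t ^ (-(1 / β)) = (D ^ β / t) ^ (1 / β) := by
    rw [div_rpow (by positivity) ht.le, ← rpow_mul hD.le, mul_one_div_cancel hβ, Real.rpow_one,
      rpow_neg ht.le, div_eq_mul_inv D]
  rw [hDt, ← rpow_mul (by positivity)]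
  congr 1
  field_simp

lemma mul_rpow_neg_inv_rpow_le {D β t : ℝ} (hβ : 1 < β) (hD : 0 < D) (ht : D ^ β / 2 ≤ t) :
    (D * t ^ (-(1 / β))) ^ (β / (β - 1)) ≤ 2 ^ (1 / (β - 1)) := by
  have hDβ : 0 < D ^ β := rpow_pos_of_pos hD β
  have ht0 : 0 < t := by linarith
  have hratio : D ^ β / t ≤ 2 := by rw [div_le_iff₀ ht0]; linarith
  rw [mul_rpow_neg_inv_rpow_eq hD ht0 (by linarith)]
  gcongr

lemma rpow_neg_le_rpow_neg_div {D β t α : ℝ} (hα : 0 ≤ α) (hβ : 0 < β) (hD : 0 < D)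
    (ht0 : 0 < t) (ht : t ≤ D ^ β) :
    D ^ (-α) ≤ t ^ (-(α / β)) := by
  have hD_eq : D ^ (-α) = (D ^ β) ^ (-(α / β)) := by
    rw [← rpow_mul hD.le]
    congr 1
    field_simp
  rw [hD_eq]
  exact rpow_le_rpow_of_nonpos ht0 ht (by have := div_nonneg hα hβ.le; linarith)

lemma subGaussian_lower_bound_ge_of_mem_Icc {α β C₁ C₂ D t : ℝ} (hα : 0 ≤ α) (hβ : 1 < β)
    (hC₁ : 0 ≤ C₁) (hC₂ : 0 ≤ C₂) (hD : 0 < D) (ht : t ∈ Icc (D ^ β / 2) (D ^ β)) :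
    C₁ * D ^ (-α) * exp (-(C₂ * 2 ^ (1 / (β - 1)))) ≤
      C₁ * t ^ (-(α / β)) * exp (-(C₂ * (D * t ^ (-(1 / β))) ^ (β / (β - 1)))) := by
  have ht0 : 0 < t := lt_of_lt_of_le (by positivity) ht.1
  gcongr
  · exact rpow_neg_le_rpow_neg_div hα (by linarith) hD ht0 ht.2
  · exact mul_rpow_neg_inv_rpow_le hβ hD ht.1

/-- Lower bound for the subordinated jumping kernel integral in case (a)
(bounded diameter): if `p(t) ≥ C₁·t^{−α/β}·exp(−C₂·(D·t^{−1/β})^{β/(β−1)})`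
for `t ∈ (0, T^β)`, then `∫_0^∞ t^{−(1+δ)} p(t) dt ≥ c·D^{−(α+δβ)}` with
`c = c(α,β,δ,C₁,C₂) > 0` independent of `T` and `D`. -/
theorem stmt_19 (α β δ C₁ C₂ : ℝ) (hα : 0 < α) (hβ : 1 < β)
    (hδ : δ ∈ Set.Ioo (0 : ℝ) 1) (hC₁ : 0 < C₁) (hC₂ : 0 < C₂) :
    ∃ c : ℝ, 0 < c ∧
      ∀ (T D : ℝ) (p : ℝ → ℝ), 0 < T → 0 < D → D ≤ T →
        Measurable p → (∀ t, 0 ≤ p t) →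
        (∀ t ∈ Set.Ioo (0 : ℝ) (T ^ β),
          C₁ * t ^ (-(α / β)) * Real.exp (-(C₂ * (D * t ^ (-(1 / β))) ^ (β / (β - 1)))) ≤ p t) →
        ENNReal.ofReal (c * D ^ (-(α + δ * β)))
          ≤ ∫⁻ t in Set.Ioi (0 : ℝ), ENNReal.ofReal (t ^ (-(1 + δ)) * p t) := by
  set E := exp (-(C₂ * 2 ^ (1 / (β - 1))))
  refine ⟨C₁ * E / 2, by positivity, fun T D p _ hD hDT _ _ hlow => ?_⟩
  have hDβ : 0 < D ^ β := rpow_pos_of_pos hD β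
  set K := (D ^ β) ^ (-(1 + δ)) * (C₁ * D ^ (-α) * E)
  have hK : ∀ t ∈ Ioo (D ^ β / 2) (D ^ β), K ≤ t ^ (-(1 + δ)) * p t := by
    intro t ht
    have ht0 : 0 < t := lt_trans (by positivity) ht.1
    have htT : t < T ^ β := ht.2.trans_le (rpow_le_rpow hD.le hDT (by linarith))
    have hp : C₁ * D ^ (-α) * E ≤ p t :=
      (subGaussian_lower_bound_ge_of_mem_Icc hα.le hβ hC₁.le hC₂.le hD
        (Ioo_subset_Icc_self ht)).trans (hlow t ⟨ht0, htT⟩)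
    exact mul_le_mul (rpow_le_rpow_of_nonpos ht0 ht.2.le (by linarith [hδ.1])) hp
      (by positivity) (by positivity)
  have hc : C₁ * E / 2 * D ^ (-(α + δ * β)) = K * (D ^ β - D ^ β / 2) := by
    have hpow : (D ^ β) ^ (-(1 + δ)) * D ^ (-α) * D ^ β = D ^ (-(α + δ * β)) := by
      rw [← rpow_mul hD.le, ← rpow_add hD, ← rpow_add hD]
      ring_nf
    rw [← hpow]
    ring
  rw [hc]
  exact ofReal_mul_sub_le_setLIntegral_of_Ioo_subset (fun t ht => lt_trans (by positivity) ht.1)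
    (by positivity) hK
end
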